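/- arXiv:2011.14001 — 2 statements merged into one kernel-verified Lean document; each statement's English description precedes it below -/
import Mathlib

section
/- Every finitely generated projective module of constant rank over a semi-local commutative ring is free. In particular the Picard group of a semi-local commutative ring is trivial. -/
/-!
By the Chinese remainder theorem, bases of the fibres `A ⧸ m ⊗ P` over the finitely many maximal
ideals `m` lift to a single family in `P`; the induced map `Aⁿ → P` is then bijective after
localizing at every maximal ideal, by Nakayama's lemma. This is `Module.free_of_flat_of_finrank_eq`
(Stacks 02M9); what remains is to read the fibre dimension over `A ⧸ m` as the rank of `P_m`.
-/

open Module TensorProduct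

lemma Module.finrank_quotient_tensor_eq_rankAtStalk {R M : Type*} [CommRing R] [AddCommGroup M]
    [Module R M] [Module.Finite R M] [Flat R M] (P : Ideal R) [hP : P.IsMaximal] :
    finrank (R ⧸ P) ((R ⧸ P) ⊗[R] M) = rankAtStalk M ⟨P, hP.isPrime⟩ := by
  let _ := Ideal.Quotient.field P
  rw [rankAtStalk_eq, ← finrank_baseChange (R := P.ResidueField) (S := R ⧸ P),
    (AlgebraTensorModule.cancelBaseChange R (R ⧸ P) P.ResidueField P.ResidueField M).finrank_eq]

/-- A finitely generated projective module of constant rank over a semi-local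
commutative ring is free.  (In particular, taking the rank to be one, every
invertible module is free and the Picard group of a semi-local ring is trivial.) -/
theorem stmt_2 (A : Type*) [CommRing A]
    (hA : {I : Ideal A | I.IsMaximal}.Finite)
    (P : Type*) [AddCommGroup P] [Module A P]
    [Module.Finite A P] [Module.Projective A P]
    (n : ℕ)
    (hrank : ∀ (m : Ideal A) [m.IsMaximal],
      Module.finrank (Localization.AtPrime m) (LocalizedModule m.primeCompl P) = n) :
    Module.Free A P := by
  have : Finite (MaximalSpectrum A) :=
    have : Finite {I : Ideal A // I.IsMaximal} := hA.to_subtype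
    .of_equiv _ (MaximalSpectrum.equivSubtype A).symm
  exact free_of_flat_of_finrank_eq A P n fun m ↦ by
    rw [finrank_quotient_tensor_eq_rankAtStalk]
    exact hrank m.asIdeal
end

section
/- Let k be a field of characteristic p > 0, k̄ an algebraic closure of k, k' a finite purely inseparable extension of k inside k̄, and q = p^r a power of p. Then the map g : (k̄ ⊗_k k')^× → (k̄ ⊗_k k(k'^q))^× sending Σᵢ aᵢ ⊗ λᵢ to Σᵢ aᵢ^q ⊗ λᵢ^q is surjective, where k(k'^q) is the subfield of k' generated over k by q-th powers of elements of k'. -/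
/-!
In characteristic `p` the `q`-th powers in `k̄ ⊗_k k'` form a subring, because `x ↦ x ^ q` is a
ring endomorphism. As `k̄` is perfect this subring contains `k̄ ⊗ 1`, and it contains every
`1 ⊗ λ ^ q`, so it contains the image of `k̄ ⊗_k k(k'^q)`, which these elements generate. Finally,
an element whose `q`-th power is a unit is itself a unit.
-/

open TensorProduct

def iterateFrobeniusRange (K A : Type*) [CommSemiring K] [CommSemiring A] [Algebra K A]
    (p n : ℕ) [ExpChar K p] [PerfectRing K p] [ExpChar A p] : Subalgebra K A where
  toSubsemiring := (iterateFrobenius A p n).rangeS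
  algebraMap_mem' a := by
    obtain ⟨b, rfl⟩ := (bijective_iterateFrobenius K p n).surjective a
    exact ⟨algebraMap K A b, by simp only [iterateFrobenius_def, map_pow]⟩

theorem mem_iterateFrobeniusRange {K A : Type*} [CommSemiring K] [CommSemiring A] [Algebra K A]
    {p n : ℕ} [ExpChar K p] [PerfectRing K p] [ExpChar A p] {x : A} :
    x ∈ iterateFrobeniusRange K A p n ↔ ∃ y : A, y ^ p ^ n = x :=
  Iff.rfl

theorem range_map_le_iterateFrobeniusRange {k K L : Type*} [CommSemiring k] [CommSemiring K]
    [CommSemiring L] [Algebra k K] [Algebra k L] {p n : ℕ} [ExpChar K p] [PerfectRing K p]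
    [ExpChar (K ⊗[k] L) p] {S : Subalgebra k L}
    (hS : S ≤ Algebra.adjoin k (Set.range fun y : L => y ^ p ^ n)) :
    (Algebra.TensorProduct.map (AlgHom.id k K) S.val).range ≤
      (iterateFrobeniusRange K (K ⊗[k] L) p n).restrictScalars k := by
  rw [Algebra.TensorProduct.map_range, sup_le_iff]
  constructor
  · rintro _ ⟨a, rfl⟩
    exact (iterateFrobeniusRange K (K ⊗[k] L) p n).algebraMap_mem a
  · rw [AlgHom.range_comp, Subalgebra.range_val]
    refine (Subalgebra.map_mono hS).trans ?_
    rw [AlgHom.map_adjoin, Algebra.adjoin_le_iff]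
    rintro _ ⟨_, ⟨y, rfl⟩, rfl⟩
    exact ⟨1 ⊗ₜ y, by rw [iterateFrobenius_def, Algebra.TensorProduct.tmul_pow, one_pow]; rfl⟩

open TensorProduct in
theorem stmt_5_general (k k' : Type*) [Field k] [Field k'] [Algebra k k']
    (p : ℕ) [hp : Fact p.Prime] [CharP k p]
    (r : ℕ) (q : ℕ) (hq : q = p ^ r)
    (Kq : Subalgebra k k') (hKq : Kq = Algebra.adjoin k (Set.range fun y : k' => y ^ q))
    (y : AlgebraicClosure k ⊗[k] Kq) (hy : IsUnit y) :
    ∃ x : AlgebraicClosure k ⊗[k] k', IsUnit x ∧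
      (Algebra.TensorProduct.map (AlgHom.id k (AlgebraicClosure k)) Kq.val) y = x ^ q := by
  subst hq
  have : ExpChar (AlgebraicClosure k ⊗[k] k') p :=
    expChar_of_injective_algebraMap (algebraMap k _).injective p
  have hmem : Algebra.TensorProduct.map (AlgHom.id k _) Kq.val y ∈
      iterateFrobeniusRange (AlgebraicClosure k) _ p r :=
    range_map_le_iterateFrobeniusRange hKq.le ⟨y, rfl⟩
  obtain ⟨x, hx⟩ := mem_iterateFrobeniusRange.mp hmem
  refine ⟨x, (isUnit_pow_iff (expChar_pow_pos k p r).ne').mp ?_, hx.symm⟩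
  exact hx ▸ hy.map _

open TensorProduct in
/-- Let `k` be a field of characteristic `p > 0`, `k̄` an algebraic closure, `k'/k` a
finite purely inseparable extension and `q = p^r`.  The map
`g : (k̄ ⊗ k')ˣ → (k̄ ⊗ k(k'^q))ˣ`, `Σ aᵢ ⊗ λᵢ ↦ Σ aᵢ^q ⊗ λᵢ^q`, is surjective:
every unit `y` of `k̄ ⊗_k k(k'^q)` is, after the (injective) inclusion into
`k̄ ⊗_k k'`, the `q`-th power of a unit. -/
theorem stmt_5 (k k' : Type*) [Field k] [Field k'] [Algebra k k']
    (p : ℕ) [hp : Fact p.Prime] [CharP k p]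
    [IsPurelyInseparable k k'] [FiniteDimensional k k']
    (r : ℕ) (q : ℕ) (hq : q = p ^ r)
    (Kq : Subalgebra k k') (hKq : Kq = Algebra.adjoin k (Set.range fun y : k' => y ^ q))
    (y : AlgebraicClosure k ⊗[k] Kq) (hy : IsUnit y) :
    ∃ x : AlgebraicClosure k ⊗[k] k', IsUnit x ∧
      (Algebra.TensorProduct.map (AlgHom.id k (AlgebraicClosure k)) Kq.val) y = x ^ q :=
  stmt_5_general k k' p (hp := hp) r q hq Kq hKq y hy
end
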